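/- Let G(1) be a neutral graph and G(2) a k-regular graph, and let G^⊕ be constructed by attaching (α−1) incomplete edges to each endpoint of every edge of G(1) (counted with multiplicity over edges) and β incomplete edges to each vertex of G(2), where 2(α−1)|E(1)| = β|V(2)|, and then merging incomplete edges in pairs (one from each side) into edges. If |E(2)|/|E(1)| = (α−1)² = (k/β)² = (|V(2)|/|V(1)|)², then 4|E^⊕| · Σ_{ij ∈ E^⊕} d_i d_j − (Σ_{ij ∈ E^⊕}(d_i + d_j))² = α⁴ [4|E(1)| Σ_{uv ∈ E(1)} d_u d_v − (Σ_{uv ∈ E(1)}(d_u + d_v))²] = 0, hence G^⊕ is neutral. -/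
import Mathlib


open Finset

attribute [local instance] Classical.propDecidable

namespace Neutral

/-- Number of edges of `G`. -/
noncomputable def m {V : Type*} [Fintype V] (G : SimpleGraph V) : ℕ :=
  G.edgeFinset.card

/-- `∑_{uv ∈ E} d_u · d_v`, each edge counted once. -/
noncomputable def dd {V : Type*} [Fintype V] (G : SimpleGraph V) : ℕ :=
  ∑ e ∈ G.edgeFinset,
    Sym2.lift ⟨fun u v => G.degree u * G.degree v, fun _ _ => Nat.mul_comm _ _⟩ e

/-- `∑_{uv ∈ E} (d_u + d_v)`, each edge counted once. -/
noncomputable def ds {V : Type*} [Fintype V] (G : SimpleGraph V) : ℕ :=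
  ∑ e ∈ G.edgeFinset,
    Sym2.lift ⟨fun u v => G.degree u + G.degree v, fun _ _ => Nat.add_comm _ _⟩ e

/-- `∑_{uv ∈ E} (d_u² + d_v²)`, each edge counted once. -/
noncomputable def dsq {V : Type*} [Fintype V] (G : SimpleGraph V) : ℕ :=
  ∑ e ∈ G.edgeFinset,
    Sym2.lift ⟨fun u v => G.degree u ^ 2 + G.degree v ^ 2, fun _ _ => Nat.add_comm _ _⟩ e

/-- A graph is irregular if it is not regular of any degree. -/
def Irregular {V : Type*} [Fintype V] (G : SimpleGraph V) : Prop :=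
  ¬ ∃ k, G.IsRegularOfDegree k

end Neutral

open Neutral


namespace Neutral

lemma sum_lift_eq {V : Type*} [Fintype V] (G : SimpleGraph V) (f : V → V → ℕ)
    (hf : ∀ a b, f a b = f b a) :
    2 * ∑ e ∈ G.edgeFinset, Sym2.lift ⟨f, hf⟩ e
      = ∑ i, ∑ j ∈ G.neighborFinset i, f i j := by
  classical
  have h1 : ∀ d : G.Dart, f d.toProd.1 d.toProd.2 = Sym2.lift ⟨f, hf⟩ d.edge := by
    intro d; rfl
  have hA : ∑ d : G.Dart, f d.toProd.1 d.toProd.2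
      = 2 * ∑ e ∈ G.edgeFinset, Sym2.lift ⟨f, hf⟩ e := by
    simp_rw [h1]
    rw [← Finset.sum_fiberwise_of_maps_to'
        (g := SimpleGraph.Dart.edge) (t := G.edgeFinset)
        (fun d _ => SimpleGraph.mem_edgeFinset.2 d.edge_mem)]
    rw [Finset.mul_sum]
    refine Finset.sum_congr rfl fun e he => ?_
    rw [Finset.sum_const, G.dart_edge_fiber_card e (SimpleGraph.mem_edgeFinset.1 he),
      smul_eq_mul]
  rw [← hA]
  rw [← Finset.sum_fiberwise_of_maps_to
      (g := fun d : G.Dart => d.toProd.1) (t := (univ : Finset V))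
      (fun d _ => Finset.mem_univ _) (fun d : G.Dart => f d.toProd.1 d.toProd.2)]
  refine Finset.sum_congr rfl fun i _ => ?_
  refine Finset.sum_bij' (fun d _ => d.toProd.2)
    (fun j hj => SimpleGraph.Dart.mk (i, j) ((SimpleGraph.mem_neighborFinset _ _ _).1 hj))
    ?_ ?_ ?_ ?_ ?_
  · intro d hd
    have h := (Finset.mem_filter.1 hd).2
    rw [SimpleGraph.mem_neighborFinset]
    have := d.adj
    rwa [h] at this
  · intro j hj
    simp
  · intro d hd
    have h := (Finset.mem_filter.1 hd).2
    cases d with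
    | mk p adj => cases p; simp_all
  · intro j hj; rfl
  · intro d hd
    have h := (Finset.mem_filter.1 hd).2
    rw [h]

lemma sum_nbr_swap {V : Type*} [Fintype V] (G : SimpleGraph V) (g : V → ℕ) :
    ∑ i, ∑ j ∈ G.neighborFinset i, g j = ∑ j, G.degree j * g j := by
  classical
  have h : ∀ i, ∑ j ∈ G.neighborFinset i, g j = ∑ j, if G.Adj i j then g j else 0 := by
    intro i
    rw [SimpleGraph.neighborFinset_eq_filter, Finset.sum_filter]
  simp_rw [h]
  rw [Finset.sum_comm]
  refine Finset.sum_congr rfl fun j _ => ?_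
  have h2 : ∀ i, (if G.Adj i j then g j else 0) = if G.Adj j i then g j else 0 := by
    intro i; rw [SimpleGraph.adj_comm]
  simp_rw [h2, ← Finset.sum_filter, ← SimpleGraph.neighborFinset_eq_filter,
    Finset.sum_const, smul_eq_mul, SimpleGraph.card_neighborFinset_eq_degree]

lemma ds_eq {V : Type*} [Fintype V] (G : SimpleGraph V) :
    ds G = ∑ v, G.degree v ^ 2 := by
  have h := sum_lift_eq G (fun u v => G.degree u + G.degree v) (fun _ _ => Nat.add_comm _ _)
  have h2 : ∑ i, ∑ j ∈ G.neighborFinset i, (G.degree i + G.degree j)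
      = 2 * ∑ v, G.degree v ^ 2 := by
    simp_rw [Finset.sum_add_distrib, Finset.sum_const, smul_eq_mul,
      SimpleGraph.card_neighborFinset_eq_degree, sum_nbr_swap, ← sq]
    ring
  have h3 : 2 * ds G = 2 * ∑ v, G.degree v ^ 2 := by
    rw [ds]; rw [h, h2]
  omega

lemma two_m_eq {V : Type*} [Fintype V] (G : SimpleGraph V) :
    2 * m G = ∑ v, G.degree v := by
  classical
  rw [m, ← SimpleGraph.sum_degrees_eq_twice_card_edges]

lemma two_dd_eq {V : Type*} [Fintype V] (G : SimpleGraph V) :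
    2 * dd G = ∑ i, G.degree i * ∑ j ∈ G.neighborFinset i, G.degree j := by
  have h := sum_lift_eq G (fun u v => G.degree u * G.degree v) (fun _ _ => Nat.mul_comm _ _)
  rw [dd, h]
  exact Finset.sum_congr rfl fun i _ => (Finset.mul_sum _ _ _).symm

end Neutral

/-- `G^⊕` is built from a neutral graph `G(1)` and a `k`-regular graph
`G(2)` by attaching `α−1` incomplete edges to each endpoint of every edge of `G(1)` and
`β` incomplete edges to each vertex of `G(2)` (with `2(α−1)|E(1)| = β|V(2)|`), then
merging the incomplete edges in pairs.  This is captured abstractly: `H` is a graph on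
`V₁ ⊕ V₂` inducing `G(1)` on `V₁` and `G(2)` on `V₂`, in which every vertex `u` of
`G(1)` has degree `α·d_u` and every vertex of `G(2)` has degree `k + β`.  If moreover
`|E(2)| = (α−1)²|E(1)|`, `k = (α−1)β` and `|V(2)| = (α−1)|V(1)|`, then
`4|E^⊕|·∑ d_i d_j − (∑(d_i+d_j))² = α⁴·(4|E(1)|·∑ d_u d_v − (∑(d_u+d_v))²) = 0`,
hence `G^⊕` is neutral. -/
theorem stmt_11 {V₁ V₂ : Type*} [Fintype V₁] [Fintype V₂]
    (G₁ : SimpleGraph V₁) (G₂ : SimpleGraph V₂) (k α β : ℕ) (hα : 1 ≤ α)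
    (hneutral : 4 * m G₁ * dd G₁ = (ds G₁) ^ 2)
    (hreg : G₂.IsRegularOfDegree k)
    (hstub : 2 * (α - 1) * m G₁ = β * Fintype.card V₂)
    (H : SimpleGraph (V₁ ⊕ V₂))
    (hind₁ : ∀ u v : V₁, H.Adj (Sum.inl u) (Sum.inl v) ↔ G₁.Adj u v)
    (hind₂ : ∀ x y : V₂, H.Adj (Sum.inr x) (Sum.inr y) ↔ G₂.Adj x y)
    (hdeg₁ : ∀ u : V₁, H.degree (Sum.inl u) = α * G₁.degree u)
    (hdeg₂ : ∀ x : V₂, H.degree (Sum.inr x) = k + β)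
    (hE : m G₂ = (α - 1) ^ 2 * m G₁)
    (hk : k = (α - 1) * β)
    (hV : Fintype.card V₂ = (α - 1) * Fintype.card V₁) :
    4 * (m H : ℤ) * (dd H : ℤ) - (ds H : ℤ) ^ 2 =
        (α : ℤ) ^ 4 * (4 * (m G₁ : ℤ) * (dd G₁ : ℤ) - (ds G₁ : ℤ) ^ 2) ∧
      4 * m H * dd H = (ds H) ^ 2 := by
  classical
  obtain ⟨a, rfl⟩ : ∃ a, α = a + 1 := ⟨α - 1, by omega⟩
  simp only [Nat.add_sub_cancel] at hstub hE hk hV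
  have hkβ : k + β = (a + 1) * β := by rw [hk]; ring
  set F : V₂ → Finset V₁ :=
    fun x => univ.filter (fun u => H.Adj (Sum.inr x) (Sum.inl u)) with hF
  have C1 : ∀ u, (H.neighborFinset (Sum.inl u)).filter (fun j => j.isLeft = true)
      = (G₁.neighborFinset u).image Sum.inl := by
    intro u; ext j
    cases j with
    | inl v => simp [SimpleGraph.mem_neighborFinset, hind₁ u v]
    | inr x => simp [SimpleGraph.mem_neighborFinset]
  have C2 : ∀ u, (H.neighborFinset (Sum.inl u)).filter (fun j => ¬ j.isLeft = true)
      = (univ.filter fun x => H.Adj (Sum.inl u) (Sum.inr x)).image Sum.inr := by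
    intro u; ext j
    cases j with
    | inl v => simp [SimpleGraph.mem_neighborFinset]
    | inr x => simp [SimpleGraph.mem_neighborFinset]
  have C3 : ∀ x, (H.neighborFinset (Sum.inr x)).filter (fun j => ¬ j.isLeft = true)
      = (G₂.neighborFinset x).image Sum.inr := by
    intro x; ext j
    cases j with
    | inl v => simp [SimpleGraph.mem_neighborFinset]
    | inr y => simp [SimpleGraph.mem_neighborFinset, hind₂ x y]
  have C4 : ∀ x, (H.neighborFinset (Sum.inr x)).filter (fun j => j.isLeft = true)
      = (F x).image Sum.inl := by
    intro x; ext j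
    cases j with
    | inl v => simp [SimpleGraph.mem_neighborFinset, hF]
    | inr y => simp [SimpleGraph.mem_neighborFinset]
  have cardL1 : ∀ u, ((H.neighborFinset (Sum.inl u)).filter
      (fun j => j.isLeft = true)).card = G₁.degree u := by
    intro u
    rw [C1 u, Finset.card_image_of_injective _ Sum.inl_injective,
      SimpleGraph.card_neighborFinset_eq_degree]
  have cardR1 : ∀ u, (univ.filter fun x => H.Adj (Sum.inl u) (Sum.inr x)).card
      = a * G₁.degree u := by
    intro u
    have h := Finset.card_filter_add_card_filter_not
      (s := H.neighborFinset (Sum.inl u)) (p := fun j => j.isLeft = true)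
    rw [cardL1 u, C2 u, Finset.card_image_of_injective _ Sum.inr_injective,
      SimpleGraph.card_neighborFinset_eq_degree, hdeg₁ u] at h
    have hx : (a + 1) * G₁.degree u = a * G₁.degree u + G₁.degree u := by ring
    omega
  have NSl : ∀ u, ∑ j ∈ H.neighborFinset (Sum.inl u), H.degree j
      = (a + 1) * ∑ v ∈ G₁.neighborFinset u, G₁.degree v
        + (a * G₁.degree u) * ((a + 1) * β) := by
    intro u
    rw [← Finset.sum_filter_add_sum_filter_not (H.neighborFinset (Sum.inl u))
      (fun j => j.isLeft = true) (fun j => H.degree j)]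
    congr 1
    · rw [C1 u, Finset.sum_image (fun a _ b _ h => Sum.inl_injective h)]
      simp_rw [hdeg₁]
      rw [← Finset.mul_sum]
    · rw [C2 u, Finset.sum_image (fun a _ b _ h => Sum.inr_injective h)]
      simp_rw [hdeg₂, hkβ]
      rw [Finset.sum_const, cardR1 u, smul_eq_mul]
  have NSr : ∀ x, ∑ j ∈ H.neighborFinset (Sum.inr x), H.degree j
      = (a + 1) * ∑ u ∈ F x, G₁.degree u + k * ((a + 1) * β) := by
    intro x
    rw [← Finset.sum_filter_add_sum_filter_not (H.neighborFinset (Sum.inr x))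
      (fun j => j.isLeft = true) (fun j => H.degree j)]
    congr 1
    · rw [C4 x, Finset.sum_image (fun a _ b _ h => Sum.inl_injective h)]
      simp_rw [hdeg₁]
      rw [← Finset.mul_sum]
    · rw [C3 x, Finset.sum_image (fun a _ b _ h => Sum.inr_injective h)]
      simp_rw [hdeg₂, hkβ]
      rw [Finset.sum_const, SimpleGraph.card_neighborFinset_eq_degree, hreg x, smul_eq_mul]
  have hcross : ∑ x, ∑ u ∈ F x, G₁.degree u = a * ds G₁ := by
    rw [ds_eq]
    have h1 : ∀ x, ∑ u ∈ F x, G₁.degree u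
        = ∑ u, if H.Adj (Sum.inr x) (Sum.inl u) then G₁.degree u else 0 := by
      intro x; rw [hF, Finset.sum_filter]
    simp_rw [h1]
    rw [Finset.sum_comm, Finset.mul_sum]
    refine Finset.sum_congr rfl fun u _ => ?_
    have h2 : ∀ x, (if H.Adj (Sum.inr x) (Sum.inl u) then G₁.degree u else 0)
        = if H.Adj (Sum.inl u) (Sum.inr x) then G₁.degree u else 0 := by
      intro x; rw [SimpleGraph.adj_comm]
    simp_rw [h2]
    rw [← Finset.sum_filter, Finset.sum_const, cardR1 u, smul_eq_mul, sq]
    ring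
  have e1 : 2 * m H = (a + 1) * (2 * m G₁) + ((a + 1) * β) * Fintype.card V₂ := by
    rw [two_m_eq H, two_m_eq G₁, Fintype.sum_sum_type]
    simp only [hdeg₁, hdeg₂, hkβ]
    rw [Finset.sum_const, Finset.card_univ, smul_eq_mul, ← Finset.mul_sum]
    ring
  have e2 : ds H = (a + 1) ^ 2 * ds G₁ + ((a + 1) * β) ^ 2 * Fintype.card V₂ := by
    rw [ds_eq H, ds_eq G₁, Fintype.sum_sum_type]
    simp only [hdeg₁, hdeg₂, hkβ]
    rw [Finset.sum_const, Finset.card_univ, smul_eq_mul]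
    simp_rw [mul_pow]
    rw [← Finset.mul_sum]
    ring
  have e3 : 2 * dd H = (a + 1) ^ 2 * (2 * dd G₁) + a * (a + 1) ^ 2 * β * ds G₁
      + (a + 1) ^ 2 * β * (a * ds G₁) + (a + 1) ^ 2 * β ^ 2 * k * Fintype.card V₂ := by
    rw [two_dd_eq H, Fintype.sum_sum_type]
    simp only [hdeg₁, hdeg₂, hkβ, NSl, NSr]
    have hT1 : ∑ u, (a + 1) * G₁.degree u *
        ((a + 1) * ∑ v ∈ G₁.neighborFinset u, G₁.degree v
          + a * G₁.degree u * ((a + 1) * β))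
        = (a + 1) ^ 2 * (2 * dd G₁) + a * (a + 1) ^ 2 * β * ds G₁ := by
      rw [two_dd_eq G₁, ds_eq G₁, Finset.mul_sum, Finset.mul_sum, ← Finset.sum_add_distrib]
      refine Finset.sum_congr rfl fun u _ => ?_
      ring
    have hT2 : ∑ x, (a + 1) * β *
        ((a + 1) * ∑ u ∈ F x, G₁.degree u + k * ((a + 1) * β))
        = (a + 1) ^ 2 * β * (a * ds G₁)
          + (a + 1) ^ 2 * β ^ 2 * k * Fintype.card V₂ := by
      rw [← hcross]
      simp_rw [mul_add, Finset.sum_add_distrib]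
      congr 1
      · rw [Finset.mul_sum]
        exact Finset.sum_congr rfl fun x _ => by ring
      · rw [Finset.sum_const, Finset.card_univ, smul_eq_mul]
        ring
    rw [hT1, hT2]
    ring
  have e1' : (2 : ℤ) * m H = (a + 1) * (2 * m G₁) + ((a + 1) * β) * Fintype.card V₂ := by
    exact_mod_cast congrArg (Nat.cast : ℕ → ℤ) e1
  have e2' : (ds H : ℤ) = (a + 1) ^ 2 * ds G₁ + ((a + 1) * β) ^ 2 * Fintype.card V₂ := by
    exact_mod_cast congrArg (Nat.cast : ℕ → ℤ) e2
  have e3' : (2 : ℤ) * dd H = (a + 1) ^ 2 * (2 * dd G₁) + a * (a + 1) ^ 2 * β * ds G₁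
      + (a + 1) ^ 2 * β * (a * ds G₁) + (a + 1) ^ 2 * β ^ 2 * k * Fintype.card V₂ := by
    exact_mod_cast congrArg (Nat.cast : ℕ → ℤ) e3
  have hstub' : (2 : ℤ) * a * m G₁ = β * Fintype.card V₂ := by
    exact_mod_cast congrArg (Nat.cast : ℕ → ℤ) hstub
  have hk' : (k : ℤ) = a * β := by exact_mod_cast congrArg (Nat.cast : ℕ → ℤ) hk
  have hm : (m H : ℤ) = ((a : ℤ) + 1) ^ 2 * m G₁ := by
    have h2 : (2 : ℤ) * m H = 2 * (((a : ℤ) + 1) ^ 2 * m G₁) := by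
      linear_combination e1' - ((a : ℤ) + 1) * hstub'
    linarith
  have hds2 : (ds H : ℤ) = ((a : ℤ) + 1) ^ 2 * ds G₁
      + 2 * a * β * ((a : ℤ) + 1) ^ 2 * m G₁ := by
    linear_combination e2' - ((a : ℤ) + 1) ^ 2 * β * hstub'
  have hdd2 : (dd H : ℤ) = ((a : ℤ) + 1) ^ 2 * dd G₁
      + a * β * ((a : ℤ) + 1) ^ 2 * ds G₁
      + a ^ 2 * β ^ 2 * ((a : ℤ) + 1) ^ 2 * m G₁ := by
    have h2 : (2 : ℤ) * dd H = 2 * (((a : ℤ) + 1) ^ 2 * dd G₁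
        + a * β * ((a : ℤ) + 1) ^ 2 * ds G₁
        + a ^ 2 * β ^ 2 * ((a : ℤ) + 1) ^ 2 * m G₁) := by
      linear_combination e3' + ((a : ℤ) + 1) ^ 2 * β ^ 2 * (Fintype.card V₂ : ℤ) * hk'
        - a * ((a : ℤ) + 1) ^ 2 * β ^ 2 * hstub'
    linarith
  have hn : (4 : ℤ) * m G₁ * dd G₁ = (ds G₁ : ℤ) ^ 2 := by
    exact_mod_cast congrArg (Nat.cast : ℕ → ℤ) hneutral
  constructor
  · rw [hm, hds2, hdd2]
    push_cast
    ring
  · have hz : (4 : ℤ) * m H * dd H = (ds H : ℤ) ^ 2 := by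
      rw [hm, hds2, hdd2]
      linear_combination (((a : ℤ) + 1)) ^ 4 * hn
    exact_mod_cast hz
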